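/- For every d ≥ 1 and p ≥ 0, the set of minimal permutations (under pattern containment) with exactly 2^p descents is finite; more generally, for any d the set of pattern-minimal permutations with exactly d descents is finite, all having size at most 2d. -/

import Mathlib

/-!
An entry of a permutation that lies in no descent (an ascent on both sides, or on its only side)
can be deleted without changing the number of descents. Each of the `d` descents involves two
entries, so a permutation longer than `2 * d` has such an entry; deleting it and standardizing
gives a strictly shorter pattern with `d` descents, so it is not pattern-minimal. Minimal
permutations thus have length at most `2 * d`, and there are finitely many of these.
-/

def descents (l : List ℕ) : ℕ :=
  (l.zip l.tail).countP (fun p => decide (p.2 < p.1))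
def IsPermList (n : ℕ) (l : List ℕ) : Prop :=
  l.Perm (List.range' 1 n)
def OrderIsoList (a b : List ℕ) : Prop :=
  a.length = b.length ∧
    ∀ i j, i < j → j < a.length → (a.getD i 0 < a.getD j 0 ↔ b.getD i 0 < b.getD j 0)

def IsPattern (π σ : List ℕ) : Prop :=
  ∃ s, s.Sublist σ ∧ OrderIsoList π s

def MinPerms (d : ℕ) : Set (List ℕ) :=
  {l | ∃ n, IsPermList n l ∧ descents l = d ∧
    ∀ m π, IsPermList m π → IsPattern π l → π.length < l.length → descents π < d}

lemma descents_cons_cons (a b : ℕ) (t : List ℕ) :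
    descents (a :: b :: t) = (if b < a then 1 else 0) + descents (b :: t) := by
  simp only [descents, List.tail_cons, List.zip_cons_cons, List.countP_cons,
    decide_eq_true_eq]
  omega

lemma descents_zero_cons (l : List ℕ) : descents (0 :: l) = descents l := by
  cases l with
  | nil => rfl
  | cons b t => simp [descents_cons_cons]

lemma descents_map_of_strictMonoOn {s : List ℕ} {f : ℕ → ℕ}
    (hf : StrictMonoOn f {x | x ∈ s}) : descents (s.map f) = descents s := by
  unfold descents
  rw [← List.map_tail, List.zip_map, List.countP_map]
  refine List.countP_congr fun ⟨x, y⟩ hxy => ?_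
  obtain ⟨hx, hy⟩ := List.of_mem_zip hxy
  simpa using hf.lt_iff_lt (List.mem_of_mem_tail hy) hx

/-- The head `b` is kept, so that the statement survives putting a further entry in front. -/
theorem exists_sublist_cons_descents_eq :
    ∀ (b : ℕ) (t : List ℕ), 2 * descents (b :: t) < t.length →
      ∃ s, s.Sublist t ∧ s.length + 1 = t.length ∧ descents (b :: s) = descents (b :: t)
  | _, [], h => absurd h (Nat.not_lt_zero _)
  | b, [c], h => ⟨[], List.nil_sublist _, rfl, by
      rw [List.length_singleton] at h
      change 0 = _
      omega⟩
  | b, c :: e :: t, h => by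
    rw [descents_cons_cons] at h
    by_cases hcb : c < b
    · obtain ⟨s, hs, hlen, hdes⟩ :=
        exists_sublist_cons_descents_eq c (e :: t) (by simp [hcb] at h ⊢; omega)
      exact ⟨c :: s, hs.cons_cons c, by simp [hlen],
        by rw [descents_cons_cons b c s, hdes, ← descents_cons_cons]⟩
    rw [if_neg hcb, descents_cons_cons] at h
    by_cases hec : e < c
    · obtain ⟨s, hs, hlen, hdes⟩ :=
        exists_sublist_cons_descents_eq e t (by simp [hec] at h; omega)
      exact ⟨c :: e :: s, (hs.cons_cons e).cons_cons c, by simp [hlen], by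
        simp only [descents_cons_cons b c, descents_cons_cons c e, hdes]⟩
    · -- `b ≤ c ≤ e`: delete `c`
      exact ⟨e :: t, List.sublist_cons_self c _, rfl, by
        simp only [descents_cons_cons, hcb, hec, show ¬e < b by omega, if_false, Nat.zero_add]⟩

theorem exists_sublist_descents_eq {l : List ℕ} (h : 2 * descents l < l.length) :
    ∃ s, s.Sublist l ∧ s.length + 1 = l.length ∧ descents s = descents l := by
  -- `0` lies below every entry, so it is a sentinel that adds no descent
  simpa only [descents_zero_cons] using
    exists_sublist_cons_descents_eq 0 l (by rwa [descents_zero_cons])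

def rankIn (S : Finset ℕ) (x : ℕ) : ℕ := (S.filter (· ≤ x)).card

lemma strictMonoOn_rankIn (S : Finset ℕ) : StrictMonoOn (rankIn S) S := by
  intro x _ y hy hxy
  refine Finset.card_lt_card (Finset.ssubset_iff_of_subset ?_ |>.2 ⟨y, ?_, ?_⟩)
  · intro z hz
    simp only [Finset.mem_filter] at hz ⊢
    exact ⟨hz.1, hz.2.trans hxy.le⟩
  · simpa using hy
  · simp [hxy]

lemma rankIn_mem_Icc {S : Finset ℕ} {x : ℕ} (hx : x ∈ S) : rankIn S x ∈ Set.Icc 1 S.card :=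
  ⟨Finset.card_pos.2 ⟨x, by simpa using hx⟩, Finset.card_filter_le _ _⟩

lemma isPermList_map_rankIn {s : List ℕ} (hs : s.Nodup) :
    IsPermList s.length (s.map (rankIn s.toFinset)) := by
  refine List.Subperm.perm_of_length_le (List.subperm_of_subset ?_ ?_) (by simp)
  · exact hs.map_on fun x hx y hy hxy =>
      (strictMonoOn_rankIn _).injOn (List.mem_toFinset.2 hx) (List.mem_toFinset.2 hy) hxy
  · intro v hv
    obtain ⟨x, hx, rfl⟩ := List.mem_map.1 hv
    obtain ⟨hpos, hle⟩ := rankIn_mem_Icc (List.mem_toFinset.2 hx)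
    rw [List.toFinset_card_of_nodup hs] at hle
    rw [List.mem_range'_1]
    omega

lemma orderIsoList_map_of_strictMonoOn {s : List ℕ} {f : ℕ → ℕ}
    (hf : StrictMonoOn f {x | x ∈ s}) : OrderIsoList (s.map f) s := by
  refine ⟨List.length_map _, fun i j hij hj => ?_⟩
  rw [List.length_map] at hj
  have hi : i < s.length := hij.trans hj
  simp only [List.getD_eq_getElem?_getD, List.getElem?_map, List.getElem?_eq_getElem hi,
    List.getElem?_eq_getElem hj, Option.map_some, Option.getD_some]
  exact hf.lt_iff_lt (s.getElem_mem _) (s.getElem_mem _)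

lemma exists_isPermList_isPattern {s σ : List ℕ} (hs : s.Nodup) (hsσ : s.Sublist σ) :
    ∃ π, IsPermList π.length π ∧ IsPattern π σ ∧ π.length = s.length ∧
      descents π = descents s := by
  have hmono : StrictMonoOn (rankIn s.toFinset) {x | x ∈ s} := by
    simpa using strictMonoOn_rankIn s.toFinset
  refine ⟨s.map (rankIn s.toFinset), ?_, ⟨s, hsσ, orderIsoList_map_of_strictMonoOn hmono⟩,
    List.length_map _, descents_map_of_strictMonoOn hmono⟩
  simpa using isPermList_map_rankIn hs

lemma length_le_of_mem_minPerms {d : ℕ} {l : List ℕ} (hl : l ∈ MinPerms d) :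
    l.length ≤ 2 * d := by
  obtain ⟨n, hperm, rfl, hmin⟩ := hl
  by_contra! hlong
  obtain ⟨s, hsl, hlen, hdes⟩ := exists_sublist_descents_eq hlong
  have hnodup : s.Nodup := (hperm.nodup_iff.2 List.nodup_range').sublist hsl
  obtain ⟨π, hπ, hpat, hπlen, hπdes⟩ := exists_isPermList_isPattern hnodup hsl
  have := hmin π.length π hπ hpat (by omega)
  omega

lemma setOf_isPermList_finite (n : ℕ) : {l | IsPermList n l}.Finite :=
  (List.range' 1 n).permutations.finite_toSet.subset fun _ hl => List.mem_permutations.2 hl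

theorem stmt6_general (d : ℕ) :
    (MinPerms d).Finite ∧ ∀ l ∈ MinPerms d, l.length ≤ 2 * d := by
  refine ⟨?_, fun l hl => length_le_of_mem_minPerms hl⟩
  refine ((Set.finite_Iic (2 * d)).biUnion fun n _ => setOf_isPermList_finite n).subset ?_
  intro l hl
  obtain ⟨n, hperm, -⟩ := id hl
  have hn : l.length = n := by rw [hperm.length_eq, List.length_range']
  exact Set.mem_biUnion (by simpa [← hn] using length_le_of_mem_minPerms hl) hperm

theorem stmt6 (d : ℕ) (hd : 1 ≤ d) :
    (MinPerms d).Finite ∧ ∀ l ∈ MinPerms d, l.length ≤ 2 * d :=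
  stmt6_general d
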